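/- Fix an integer N ≥ 0, and for each 0 ≤ k ≤ N fix a (k+1)-point Gauss–Legendre rule with nodes a^k_0, …, a^k_k and weights w^k_0, …, w^k_k, with Lagrange basis polynomials ℓ^k_i. Let J : ℝ² → ℝ be bilinear, i.e. J(a,b) = α₀ + α₁a + α₂b + α₃ab for some real α₀, α₁, α₂, α₃. Then for all admissible indices (i,j,k) and (i',j',k') (with 0 ≤ k, k' ≤ N, 0 ≤ i,j ≤ k, 0 ≤ i',j' ≤ k'), ∫_{−1}^{1}∫_{−1}^{1}∫_{−1}^{1} φ_{ijk}(a,b,c) · φ_{i'j'k'}(a,b,c) · ((1−c)/2)² · J(a,b) da db dc = δ_{ii'}·δ_{jj'}·δ_{kk'} · J(a^k_i, a^k_j) · w^k_i · w^k_j · (2/(2k+3)). In particular the mass matrix of the semi-nodal basis with respect to the weight ((1−c)/2)²·J(a,b) on the cube [−1,1]³ is diagonal. -/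

import Mathlib

open Finset in
/-- The Jacobi polynomial `P_n^{(α,0)}` (as a real function), defined by the explicit
formula `P_n^{(α,0)}(x) = ∑_{s=0}^{n} C(n+α, n−s)·C(n, s)·((x−1)/2)^s·((x+1)/2)^{n−s}`. -/
noncomputable def jacobiP (n α : ℕ) (x : ℝ) : ℝ :=
  ∑ s ∈ range (n + 1),
    ((n + α).choose (n - s) : ℝ) * (n.choose s : ℝ) * ((x - 1) / 2) ^ s * ((x + 1) / 2) ^ (n - s)

/-- The semi-nodal basis function
`φ_{ijk}(a,b,c) = ℓ^k_i(a)·ℓ^k_j(b)·((1−c)/2)^k·P_{N−k}^{(2k+3,0)}(c)`,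
where `ℓ k i` is the `i`-th Lagrange basis polynomial on the `(k+1)` nodes of level `k`. -/
noncomputable def semiNodal (ℓ : ℕ → ℕ → Polynomial ℝ) (N i j k : ℕ) (a b c : ℝ) : ℝ :=
  (ℓ k i).eval a * (ℓ k j).eval b * ((1 - c) / 2) ^ k * jacobiP (N - k) (2 * k + 3) c

/-!
The integrand separates into a function of `(a, b)` times
`((1-c)/2)^(k+k'+2) · P_{N-k}^{(2k+3,0)}(c) · P_{N-k'}^{(2k'+3,0)}(c)`.

For the `c`-factor substitute `t = (1-c)/2`, which turns `P_n^{(α,0)}` into `shiftedJacobi n α`,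
a combination of the Bernstein-type monomials `t^s (1-t)^(n-s)`. By the Beta integral,
`∫₀¹ t^(α+m) · shiftedJacobi n α` is then an `n`-th finite difference of a polynomial of degree `m`
in `s`, hence `0` for `m < n`. This orthogonality kills the `c`-integral for `k ≠ k'`; for `k = k'`
the weight is only `t^(2k+2)`, and splitting `Q := shiftedJacobi (N-k) (2k+3)` as
`Q(0) + t · Q.divX` leaves `Q(0) · ∫₀¹ t^(2k+2) Q`, a Beta-type sum equal to `1/(2k+3)`.

For `k = k'` the `a`- and `b`-integrands `ℓ_i ℓ_{i'} · (affine)` have degree `≤ 2k+1`, so the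
Gauss–Legendre rule is exact on them, and the Lagrange property collapses the quadrature sum to
`δ_{ii'} w_i J(a_i, ·)`.
-/

section

open Finset Polynomial
open scoped Nat

theorem integral_pow_mul_one_sub_pow (a b : ℕ) :
    ∫ t in (0 : ℝ)..1, t ^ a * (1 - t) ^ b = (a ! * b ! : ℝ) / (a + b + 1)! := by
  induction b generalizing a with
  | zero =>
    simp only [pow_zero, mul_one, integral_pow, Nat.factorial_zero, Nat.cast_one, add_zero,
      Nat.factorial_succ, Nat.cast_mul]
    field_simp
    push_cast
    ring
  | succ b ih =>
    have hsplit : ∀ t : ℝ,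
        t ^ a * (1 - t) ^ (b + 1) = t ^ a * (1 - t) ^ b - t ^ (a + 1) * (1 - t) ^ b :=
      fun t => by ring
    simp only [hsplit]
    rw [intervalIntegral.integral_sub (by apply Continuous.intervalIntegrable; fun_prop)
      (by apply Continuous.intervalIntegrable; fun_prop), ih, ih,
      show a + 1 + b + 1 = a + b + 1 + 1 by ring, show a + (b + 1) + 1 = a + b + 1 + 1 by ring]
    simp only [Nat.factorial_succ, Nat.cast_mul]
    field_simp
    push_cast
    ring

theorem sum_range_neg_one_pow_mul_choose_mul_eval_eq_zero {R : Type*} [CommRing R] {P : R[X]}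
    {n : ℕ} (hP : P.natDegree < n) :
    ∑ s ∈ range (n + 1), (-1) ^ s * (n.choose s : R) * P.eval (s : R) = 0 := by
  have h := congr_fun (P.fwdDiff_iter_eq_zero_of_degree_lt hP) 0
  rw [fwdDiff_iter_eq_sum_shift] at h
  simp only [zsmul_eq_mul, nsmul_eq_mul, mul_one, zero_add, Pi.zero_apply] at h
  calc ∑ s ∈ range (n + 1), (-1) ^ s * (n.choose s : R) * P.eval (s : R)
      = (-1) ^ n * ∑ s ∈ range (n + 1), ((-1) ^ (n - s) * n.choose s : ℤ) * P.eval (s : R) :=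
        by
        rw [mul_sum]
        refine sum_congr rfl fun s hs => ?_
        have hs : s ≤ n := Nat.lt_succ_iff.mp (mem_range.mp hs)
        rw [← mul_assoc, Int.cast_mul, ← mul_assoc, Int.cast_pow, Int.cast_neg, Int.cast_one,
          ← pow_add, show n + (n - s) = s + 2 * (n - s) by omega, pow_add, pow_mul, neg_one_sq,
          one_pow, mul_one, Int.cast_natCast]
    _ = 0 := by rw [h, mul_zero]

noncomputable def shiftedJacobi (n α : ℕ) : ℝ[X] :=
  ∑ s ∈ range (n + 1),
    C ((n + α).choose (n - s) * n.choose s : ℝ) * (-X) ^ s * (1 - X) ^ (n - s)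

theorem jacobiP_eq_eval_shiftedJacobi (n α : ℕ) (x : ℝ) :
    jacobiP n α x = (shiftedJacobi n α).eval ((1 - x) / 2) := by
  simp only [jacobiP, shiftedJacobi, eval_finsetSum, eval_mul, eval_pow, eval_C, eval_neg,
    eval_X, eval_sub, eval_one]
  refine sum_congr rfl fun s _ => ?_
  ring_nf

theorem degree_shiftedJacobi_le (n α : ℕ) : (shiftedJacobi n α).degree ≤ n := by
  refine (degree_sum_le _ _).trans (Finset.sup_le fun s hs => ?_)
  have hs : s ≤ n := Nat.lt_succ_iff.mp (mem_range.mp hs)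
  compute_degree
  rw [← WithBot.coe_add, Nat.add_sub_cancel' hs]
  rfl

theorem eval_zero_shiftedJacobi (n α : ℕ) : (shiftedJacobi n α).eval 0 = (n + α).choose n := by
  rw [shiftedJacobi, eval_finsetSum, sum_eq_single 0 (fun s _ hs => by simp [zero_pow hs])
    (fun h => absurd (mem_range.mpr n.succ_pos) h)]
  simp

theorem integral_pow_mul_shiftedJacobi (n α γ : ℕ) :
    ∫ t in (0 : ℝ)..1, t ^ γ * (shiftedJacobi n α).eval t =
      ∑ s ∈ range (n + 1), (-1) ^ s * (n.choose s : ℝ) *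
        (((n + α).choose (n - s) * (n - s)! * (γ + s)! : ℕ) : ℝ) / (γ + n + 1)! := by
  have hexpand : ∀ t : ℝ, t ^ γ * (shiftedJacobi n α).eval t = ∑ s ∈ range (n + 1),
      ((n + α).choose (n - s) * n.choose s * (-1) ^ s : ℝ) * (t ^ (γ + s) * (1 - t) ^ (n - s)) :=
      by
    intro t
    simp only [shiftedJacobi, eval_finsetSum, eval_mul, eval_pow, eval_C, eval_neg, eval_X,
      eval_sub, eval_one, mul_sum]
    refine sum_congr rfl fun s _ => by ring
  simp only [hexpand]
  rw [intervalIntegral.integral_finsetSum fun s _ => by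
    apply Continuous.intervalIntegrable; fun_prop]
  refine sum_congr rfl fun s hs => ?_
  have hs : s ≤ n := Nat.lt_succ_iff.mp (mem_range.mp hs)
  rw [intervalIntegral.integral_const_mul, integral_pow_mul_one_sub_pow,
    show γ + s + (n - s) + 1 = γ + n + 1 by omega]
  push_cast
  ring

theorem integral_pow_add_mul_shiftedJacobi_eq_zero {n m : ℕ} (α : ℕ) (hm : m < n) :
    ∫ t in (0 : ℝ)..1, t ^ (α + m) * (shiftedJacobi n α).eval t = 0 := by
  set P : ℝ[X] := (ascPochhammer ℝ m).comp (X + C (α + 1 : ℝ))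
  have hP : P.natDegree = m := by
    rw [natDegree_comp, ascPochhammer_natDegree, natDegree_X_add_C, mul_one]
  have hPeval : ∀ s : ℕ, P.eval (s : ℝ) = (α + s + 1).ascFactorial m := by
    intro s
    rw [eval_comp, ← ascPochhammer_nat_eq_natCast_ascFactorial]
    simp only [eval_add, eval_X, eval_C]
    push_cast
    ring_nf
  have hcoeff : ∀ s ≤ n, (n + α).choose (n - s) * (n - s)! * (α + m + s)! =
      (n + α)! * (α + s + 1).ascFactorial m := by
    intro s hs
    rw [show α + m + s = α + s + m by ring, ← Nat.factorial_mul_ascFactorial, ← mul_assoc,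
      show α + s = n + α - (n - s) by omega, Nat.choose_mul_factorial_mul_factorial (by omega)]
  rw [integral_pow_mul_shiftedJacobi]
  calc _ = ((n + α)! / (α + m + n + 1)! : ℝ) *
        ∑ s ∈ range (n + 1), (-1) ^ s * (n.choose s : ℝ) * P.eval (s : ℝ) := by
        rw [mul_sum]
        refine sum_congr rfl fun s hs => ?_
        rw [hcoeff s (Nat.lt_succ_iff.mp (mem_range.mp hs)), hPeval]
        push_cast
        ring
    _ = 0 := by rw [sum_range_neg_one_pow_mul_choose_mul_eval_eq_zero (hP ▸ hm), mul_zero]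

theorem integral_pow_mul_eval_mul_shiftedJacobi_eq_zero {n : ℕ} (α : ℕ) {q : ℝ[X]}
    (hq : q.degree < n) :
    ∫ t in (0 : ℝ)..1, t ^ α * q.eval t * (shiftedJacobi n α).eval t = 0 := by
  have hexpand : ∀ t : ℝ, t ^ α * q.eval t * (shiftedJacobi n α).eval t =
      ∑ m ∈ q.support, q.coeff m * (t ^ (α + m) * (shiftedJacobi n α).eval t) := by
    intro t
    rw [eval_eq_sum, Polynomial.sum, mul_sum, sum_mul]
    refine sum_congr rfl fun m _ => by ring
  simp only [hexpand]
  rw [intervalIntegral.integral_finsetSum fun m _ => by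
    apply Continuous.intervalIntegrable; fun_prop]
  refine sum_eq_zero fun m hm => ?_
  have hmn : m < n := by exact_mod_cast (le_degree_of_mem_supp m hm).trans_lt hq
  rw [intervalIntegral.integral_const_mul, integral_pow_add_mul_shiftedJacobi_eq_zero α hmn,
    mul_zero]

theorem integral_pow_mul_shiftedJacobi_succ (n β : ℕ) :
    ∫ t in (0 : ℝ)..1, t ^ β * (shiftedJacobi n (β + 1)).eval t =
      (n ! * β ! : ℝ) / (n + β + 1)! := by
  have hbinom : ∀ t : ℝ, t ^ β * (1 - t) ^ n =
      ∑ s ∈ range (n + 1), (-1) ^ s * (n.choose s : ℝ) * t ^ (β + s) := by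
    intro t
    rw [show 1 - t = -t + 1 by ring, add_pow, mul_sum]
    refine sum_congr rfl fun s _ => by ring
  have hbeta := integral_pow_mul_one_sub_pow β n
  simp only [hbinom] at hbeta
  rw [intervalIntegral.integral_finsetSum fun s _ => by
    apply Continuous.intervalIntegrable; fun_prop] at hbeta
  rw [integral_pow_mul_shiftedJacobi, show n + β + 1 = β + n + 1 by ring, mul_comm (n ! : ℝ),
    ← hbeta]
  refine sum_congr rfl fun s hs => ?_
  have hs : s ≤ n := Nat.lt_succ_iff.mp (mem_range.mp hs)
  have hcoeff :
      (n + (β + 1)).choose (n - s) * (n - s)! * (β + s)! * (β + s + 1) = (β + n + 1)! := by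
    rw [mul_assoc _ (β + s)!, mul_comm (β + s)!, ← Nat.factorial_succ,
      show β + s + 1 = n + (β + 1) - (n - s) by omega,
      Nat.choose_mul_factorial_mul_factorial (by omega)]
    ring_nf
  have hchoose_ne : ((n + (β + 1)).choose (n - s) : ℝ) ≠ 0 :=
    Nat.cast_ne_zero.mpr (Nat.choose_pos (by omega)).ne'
  rw [intervalIntegral.integral_const_mul, integral_pow, ← hcoeff]
  push_cast
  field_simp
  ring

theorem integral_pow_mul_shiftedJacobi_sq (n β : ℕ) :
    ∫ t in (0 : ℝ)..1, t ^ β * (shiftedJacobi n (β + 1)).eval t ^ 2 = 1 / (β + 1) := by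
  set Q := shiftedJacobi n (β + 1)
  have hQ0 : Q.eval 0 = (n + (β + 1)).choose n := eval_zero_shiftedJacobi n (β + 1)
  have hchoose_ne : ((n + (β + 1)).choose n : ℝ) ≠ 0 :=
    Nat.cast_ne_zero.mpr (Nat.choose_pos (by omega)).ne'
  have hQ : Q ≠ 0 := fun h => hchoose_ne (by rw [← hQ0, h, eval_zero])
  have hdivX : Q.divX.degree < n := (degree_divX_lt hQ).trans_le (degree_shiftedJacobi_le n _)
  have hsplit : ∀ t : ℝ, t ^ β * Q.eval t ^ 2 =
      t ^ (β + 1) * Q.divX.eval t * Q.eval t + Q.eval 0 * (t ^ β * Q.eval t) := by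
    intro t
    have h := congrArg (eval t) (X_mul_divX_add Q)
    simp only [eval_add, eval_mul, eval_X, eval_C, coeff_zero_eq_eval_zero] at h
    linear_combination (-(t ^ β * Q.eval t)) * h
  simp only [hsplit]
  rw [intervalIntegral.integral_add (by apply Continuous.intervalIntegrable; fun_prop)
      (by apply Continuous.intervalIntegrable; fun_prop),
    integral_pow_mul_eval_mul_shiftedJacobi_eq_zero _ hdivX, intervalIntegral.integral_const_mul,
    integral_pow_mul_shiftedJacobi_succ, hQ0, zero_add]
  have hchoose := Nat.choose_mul_factorial_mul_factorial (show n ≤ n + (β + 1) by omega)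
  rw [show n + (β + 1) - n = β + 1 by omega, Nat.factorial_succ] at hchoose
  rw [show n + β + 1 = n + (β + 1) by ring, ← hchoose]
  push_cast
  field_simp

theorem integral_pow_mul_shiftedJacobi_mul_shiftedJacobi_of_lt {N k k' : ℕ} (hkk : k < k')
    (hk' : k' ≤ N) :
    ∫ t in (0 : ℝ)..1, t ^ (k + k' + 2) * (shiftedJacobi (N - k) (2 * k + 3)).eval t *
      (shiftedJacobi (N - k') (2 * k' + 3)).eval t = 0 := by
  set q : ℝ[X] := X ^ (k' - k - 1) * shiftedJacobi (N - k') (2 * k' + 3)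
  have hq : q.degree < (N - k : ℕ) := by
    refine (degree_mul_le _ _).trans_lt ?_
    refine (add_le_add (degree_X_pow_le _) (degree_shiftedJacobi_le _ _)).trans_lt ?_
    exact_mod_cast (show k' - k - 1 + (N - k') < N - k by omega)
  have hfactor : ∀ t : ℝ, t ^ (k + k' + 2) * (shiftedJacobi (N - k) (2 * k + 3)).eval t *
      (shiftedJacobi (N - k') (2 * k' + 3)).eval t =
      t ^ (2 * k + 3) * q.eval t * (shiftedJacobi (N - k) (2 * k + 3)).eval t := by
    intro t
    rw [eval_mul, eval_pow, eval_X, show k + k' + 2 = 2 * k + 3 + (k' - k - 1) by omega, pow_add]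
    ring
  simp only [hfactor]
  exact integral_pow_mul_eval_mul_shiftedJacobi_eq_zero _ hq

theorem integral_comp_one_sub_div_two (f : ℝ → ℝ) :
    ∫ c in (-1 : ℝ)..1, f ((1 - c) / 2) = 2 * ∫ t in (0 : ℝ)..1, f t := by
  have h := intervalIntegral.integral_comp_sub_div f (two_ne_zero' ℝ) (1 / 2) (a := -1) (b := 1)
  rw [show (1 : ℝ) / 2 - 1 / 2 = 0 by norm_num, show (1 : ℝ) / 2 - -1 / 2 = 1 by norm_num,
    smul_eq_mul] at h
  simpa only [sub_div] using h

theorem integral_jacobiP_mul_jacobiP {N k k' : ℕ} (hk : k ≤ N) (hk' : k' ≤ N) :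
    ∫ c in (-1 : ℝ)..1, ((1 - c) / 2) ^ (k + k' + 2) * jacobiP (N - k) (2 * k + 3) c *
      jacobiP (N - k') (2 * k' + 3) c = if k = k' then 2 / (2 * k + 3 : ℝ) else 0 := by
  simp only [jacobiP_eq_eval_shiftedJacobi]
  rw [integral_comp_one_sub_div_two fun t => t ^ (k + k' + 2) *
    (shiftedJacobi (N - k) (2 * k + 3)).eval t * (shiftedJacobi (N - k') (2 * k' + 3)).eval t]
  rcases lt_trichotomy k k' with hlt | rfl | hgt
  · rw [integral_pow_mul_shiftedJacobi_mul_shiftedJacobi_of_lt hlt hk', if_neg hlt.ne, mul_zero]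
  · have hsq : ∀ t : ℝ, t ^ (k + k + 2) * (shiftedJacobi (N - k) (2 * k + 3)).eval t *
        (shiftedJacobi (N - k) (2 * k + 3)).eval t =
        t ^ (2 * k + 2) * (shiftedJacobi (N - k) (2 * k + 2 + 1)).eval t ^ 2 :=
      fun t => by ring_nf
    simp only [hsq, integral_pow_mul_shiftedJacobi_sq, if_pos]
    push_cast
    field_simp
    ring
  · have hswap : ∀ t : ℝ, t ^ (k + k' + 2) * (shiftedJacobi (N - k) (2 * k + 3)).eval t *
        (shiftedJacobi (N - k') (2 * k' + 3)).eval t =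
        t ^ (k' + k + 2) * (shiftedJacobi (N - k') (2 * k' + 3)).eval t *
          (shiftedJacobi (N - k) (2 * k + 3)).eval t := fun t => by ring_nf
    simp only [hswap]
    rw [integral_pow_mul_shiftedJacobi_mul_shiftedJacobi_of_lt hgt hk, if_neg hgt.ne', mul_zero]

theorem integral_lagrange_mul_lagrange_mul_affine {k : ℕ} {a w : ℕ → ℝ} {ℓ : ℕ → ℝ[X]}
    (hquad : ∀ p : ℝ[X], p.degree ≤ (2 * k + 1 : ℕ) →
      ∑ m ∈ range (k + 1), w m * p.eval (a m) = ∫ x in (-1 : ℝ)..1, p.eval x)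
    (hldeg : ∀ i ≤ k, (ℓ i).degree ≤ k)
    (hleval : ∀ i ≤ k, ∀ m ≤ k, (ℓ i).eval (a m) = if i = m then 1 else 0)
    {i i' : ℕ} (hi : i ≤ k) (hi' : i' ≤ k) {f : ℝ → ℝ} {u v : ℝ} (hf : ∀ x, f x = v * x + u) :
    ∫ x in (-1 : ℝ)..1, (ℓ i).eval x * (ℓ i').eval x * f x =
      if i = i' then w i * f (a i) else 0 := by
  set p : ℝ[X] := ℓ i * ℓ i' * (C v * X + C u)
  have hp : p.degree ≤ (2 * k + 1 : ℕ) := by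
    have hlin : (C v * X + C u).degree ≤ 1 := degree_linear_le
    calc p.degree ≤ (ℓ i * ℓ i').degree + (C v * X + C u).degree := degree_mul_le _ _
      _ ≤ (k + k : WithBot ℕ) + 1 :=
        add_le_add ((degree_mul_le _ _).trans (add_le_add (hldeg i hi) (hldeg i' hi'))) hlin
      _ = (2 * k + 1 : ℕ) := by norm_cast; ring_nf
  have hpeval : ∀ x, (ℓ i).eval x * (ℓ i').eval x * f x = p.eval x := fun x => by simp [p, hf]
  simp only [hpeval]
  rw [← hquad p hp, sum_eq_single_of_mem i (mem_range.mpr (by omega)) fun m hm hmi => by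
    simp [p, hleval i hi m (Nat.lt_succ_iff.mp (mem_range.mp hm)), hmi.symm]]
  simp only [p, eval_mul, eval_add, eval_C, eval_X, hleval i hi i hi, hleval i' hi' i hi, hf]
  by_cases hii' : i = i'
  · simp [hii']
  · simp [hii', Ne.symm hii']

end

open Finset in
theorem semiNodal_orthogonal_general (N : ℕ) (a w : ℕ → ℕ → ℝ) (ℓ : ℕ → ℕ → Polynomial ℝ)
    (hquad : ∀ k ≤ N, ∀ p : Polynomial ℝ, p.degree ≤ (2 * k + 1 : ℕ) →
      ∑ i ∈ range (k + 1), w k i * p.eval (a k i) = ∫ x in (-1 : ℝ)..1, p.eval x)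
    (hldeg : ∀ k ≤ N, ∀ i ≤ k, (ℓ k i).degree ≤ (k : ℕ))
    (hleval : ∀ k ≤ N, ∀ i ≤ k, ∀ m ≤ k, (ℓ k i).eval (a k m) = if i = m then 1 else 0)
    (J : ℝ → ℝ → ℝ) (α₀ α₁ α₂ α₃ : ℝ)
    (hJ : ∀ x y, J x y = α₀ + α₁ * x + α₂ * y + α₃ * (x * y))
    (i j k i' j' k' : ℕ) (hk : k ≤ N) (hk' : k' ≤ N)
    (hi : i ≤ k) (hj : j ≤ k) (hi' : i' ≤ k') (hj' : j' ≤ k') :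
    ∫ c in (-1 : ℝ)..1, ∫ y in (-1 : ℝ)..1, ∫ x in (-1 : ℝ)..1,
        semiNodal ℓ N i j k x y c * semiNodal ℓ N i' j' k' x y c *
          ((1 - c) / 2) ^ 2 * J x y
      = (if i = i' then (1 : ℝ) else 0) * (if j = j' then (1 : ℝ) else 0) *
          (if k = k' then (1 : ℝ) else 0) *
          J (a k i) (a k j) * w k i * w k j * (2 / (2 * (k : ℝ) + 3)) := by
  have hseparate : ∀ x y c, semiNodal ℓ N i j k x y c * semiNodal ℓ N i' j' k' x y c *
      ((1 - c) / 2) ^ 2 * J x y =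
      (ℓ k j).eval y * (ℓ k' j').eval y * ((ℓ k i).eval x * (ℓ k' i').eval x * J x y) *
        (((1 - c) / 2) ^ (k + k' + 2) * jacobiP (N - k) (2 * k + 3) c *
          jacobiP (N - k') (2 * k' + 3) c) := by
    intro x y c
    simp only [semiNodal]
    ring
  simp only [hseparate, intervalIntegral.integral_mul_const, intervalIntegral.integral_const_mul,
    integral_jacobiP_mul_jacobiP hk hk']
  rcases eq_or_ne k k' with rfl | hkk
  swap
  · simp [hkk]
  have quad := @integral_lagrange_mul_lagrange_mul_affine _ _ _ _ (hquad k hk) (hldeg k hk)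
    (hleval k hk)
  have hx : ∀ y, ∫ x in (-1 : ℝ)..1, (ℓ k i).eval x * (ℓ k i').eval x * J x y =
      if i = i' then w k i * J (a k i) y else 0 :=
    fun y => quad hi hi' (u := α₀ + α₂ * y) (v := α₁ + α₃ * y) fun x => by rw [hJ]; ring
  simp only [hx]
  by_cases hii : i = i'
  swap
  · simp [hii]
  subst hii
  have hy : ∫ y in (-1 : ℝ)..1, (ℓ k j).eval y * (ℓ k j').eval y * (w k i * J (a k i) y) =
      w k i * if j = j' then w k j * J (a k i) (a k j) else 0 := by
    simp only [mul_left_comm _ (w k i), intervalIntegral.integral_const_mul]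
    rw [quad hj hj' (u := α₀ + α₁ * a k i) (v := α₂ + α₃ * a k i) fun y => by rw [hJ]; ring]
  simp only [if_pos, hy]
  split_ifs <;> ring

open Finset in
/-- Orthogonality of the semi-nodal basis with respect to the weight
`((1−c)/2)²·J(a,b)` on `[−1,1]³`, where `J` is bilinear and, for each `0 ≤ k ≤ N`,
`(a^k_·, w^k_·)` is a `(k+1)`-point Gauss–Legendre rule with Lagrange basis
polynomials `ℓ^k_·`:
`∫∫∫ φ_{ijk}·φ_{i'j'k'}·((1−c)/2)²·J(a,b) = δ_{ii'} δ_{jj'} δ_{kk'} · J(a^k_i, a^k_j) · w^k_i · w^k_j · 2/(2k+3)`.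
In particular the associated mass matrix is diagonal. -/
theorem semiNodal_orthogonal (N : ℕ) (a w : ℕ → ℕ → ℝ) (ℓ : ℕ → ℕ → Polynomial ℝ)
    (hmem : ∀ k ≤ N, ∀ i ≤ k, a k i ∈ Set.Ioo (-1 : ℝ) 1)
    (hdist : ∀ k ≤ N, ∀ i ≤ k, ∀ m ≤ k, a k i = a k m → i = m)
    (hwpos : ∀ k ≤ N, ∀ i ≤ k, 0 < w k i)
    (hquad : ∀ k ≤ N, ∀ p : Polynomial ℝ, p.degree ≤ (2 * k + 1 : ℕ) →
      ∑ i ∈ range (k + 1), w k i * p.eval (a k i) = ∫ x in (-1 : ℝ)..1, p.eval x)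
    (hldeg : ∀ k ≤ N, ∀ i ≤ k, (ℓ k i).degree ≤ (k : ℕ))
    (hleval : ∀ k ≤ N, ∀ i ≤ k, ∀ m ≤ k, (ℓ k i).eval (a k m) = if i = m then 1 else 0)
    (J : ℝ → ℝ → ℝ) (α₀ α₁ α₂ α₃ : ℝ)
    (hJ : ∀ x y, J x y = α₀ + α₁ * x + α₂ * y + α₃ * (x * y))
    (i j k i' j' k' : ℕ) (hk : k ≤ N) (hk' : k' ≤ N)
    (hi : i ≤ k) (hj : j ≤ k) (hi' : i' ≤ k') (hj' : j' ≤ k') :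
    ∫ c in (-1 : ℝ)..1, ∫ y in (-1 : ℝ)..1, ∫ x in (-1 : ℝ)..1,
        semiNodal ℓ N i j k x y c * semiNodal ℓ N i' j' k' x y c *
          ((1 - c) / 2) ^ 2 * J x y
      = (if i = i' then (1 : ℝ) else 0) * (if j = j' then (1 : ℝ) else 0) *
          (if k = k' then (1 : ℝ) else 0) *
          J (a k i) (a k j) * w k i * w k j * (2 / (2 * (k : ℝ) + 3)) :=
  semiNodal_orthogonal_general N a w ℓ hquad hldeg hleval J α₀ α₁ α₂ α₃ hJ i j k i' j' k' hk hk' hi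
    hj hi' hj'
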